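/- arXiv:1510.04463 — 2 statements merged into one kernel-verified Lean document; each statement's English description precedes it below -/
import Mathlib

section
/- Let G be a simple graph whose vertex set is V = X ⊔ Y with |X| = r, |Y| = s. Suppose that for all distinct x_i, x_j ∈ X and all distinct y_l, y_m ∈ Y: the restriction of Δ(G) to {x_i, y_l, x_j} is disconnected (has ≥ 2 components) and the restriction of Δ(G) to {y_l, x_j, y_m} is disconnected. Then G contains as a subgraph either the complete bipartite graph K_{r,s} on the bipartition (X, Y), or a complete multipartite graph K_{2,…,2,a,b} (with t ≥ 1 parts of size 2 and two parts of sizes a and b, 2t + a + b = r + s) on the vertex set V. -/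
/-!
In `Gᶜ`, a triple with a disconnected induced subgraph contains no path of length two. Applied
to the triples that meet both `X` and `Y = Xᶜ`, this says: if `x ∈ X` and `y ∈ Y` are
non-adjacent in `G`, then both are adjacent in `G` to every other vertex. So the non-edges of
`G` between `X` and `Y` form a matching, and every other non-edge of `G` joins two unmatched
vertices on the same side. If the matching is empty, `G` contains `K_{r,s}`; otherwise its `t`
edges together with the unmatched vertices of `X` and those of `Y` are the parts of a complete
multipartite subgraph `K_{2,…,2,a,b}`.
-/

namespace SimpleGraph

variable {V : Type*}

lemma preconnected_induce_triple_of_adj_of_adj {H : SimpleGraph V} {a b c : V}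
    (hab : H.Adj a b) (hac : H.Adj a c) : (H.induce {a, b, c}).Preconnected := by
  have reachable_a (u : ({a, b, c} : Set V)) :
      (H.induce {a, b, c}).Reachable u ⟨a, by simp⟩ := by
    obtain ⟨u, hu⟩ := u
    rcases hu with rfl | rfl | rfl
    · rfl
    · exact Adj.reachable (by simpa using hab.symm)
    · exact Adj.reachable (by simpa using hac.symm)
  exact fun u v => (reachable_a u).trans (reachable_a v).symm

lemma not_adj_of_two_le_card_connectedComponent_induce {H : SimpleGraph V} {a b c : V}
    (h : 2 ≤ Nat.card (H.induce {a, b, c}).ConnectedComponent) (hab : H.Adj a b) :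
    ¬H.Adj a c := fun hac => by
  have := (preconnected_induce_triple_of_adj_of_adj hab hac).subsingleton_connectedComponent
  have := Finite.card_le_one_iff_subsingleton.mpr this
  omega

lemma adj_of_two_le_card_connectedComponent_induce_compl {G : SimpleGraph V} {a b c : V}
    (h : 2 ≤ Nat.card (Gᶜ.induce {a, b, c}).ConnectedComponent) (hab : a ≠ b) (hac : a ≠ c)
    (hbc : b ≠ c) (hnab : ¬G.Adj a b) : G.Adj a c ∧ G.Adj b c := by
  have hab' : Gᶜ.Adj a b := (compl_adj G a b).mpr ⟨hab, hnab⟩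
  constructor
  · by_contra hac'
    exact not_adj_of_two_le_card_connectedComponent_induce h hab'
      ((compl_adj G a c).mpr ⟨hac, hac'⟩)
  · by_contra hbc'
    exact not_adj_of_two_le_card_connectedComponent_induce (Set.insert_comm a b {c} ▸ h) hab'.symm
      ((compl_adj G b c).mpr ⟨hbc, hbc'⟩)

structure IsMatchingAcross (M : SimpleGraph V) (X : Set V) : Prop where
  eq_of_adj_of_adj {u v w : V} : M.Adj u v → M.Adj u w → v = w
  mem_iff_notMem_of_adj {u v : V} : M.Adj u v → (u ∈ X ↔ v ∉ X)

open Classical in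
/-- The edges of `M` are numbered through their endpoints in `X`; unmatched vertices get
label `t` or `t + 1` according to their side. -/
noncomputable def matchingLabel [Finite V] (M : SimpleGraph V) (X : Set V) (v : V) :
    Fin (Nat.card ↥(X ∩ M.support) + 2) :=
  if h : ∃ x : ↥(X ∩ M.support), v = x ∨ M.Adj v x then
    Fin.castAdd 2 (Finite.equivFin _ h.choose)
  else if v ∈ X then Fin.natAdd _ 0 else Fin.natAdd _ 1

lemma matchingLabel_eq_of_notMem_support [Finite V] {M : SimpleGraph V} {X : Set V} {u v : V}
    (hu : u ∉ M.support) (hv : v ∉ M.support) (huv : u ∈ X ↔ v ∈ X) :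
    matchingLabel M X u = matchingLabel M X v := by
  have unmatched {w : V} (hw : w ∉ M.support) :
      ¬∃ x : ↥(X ∩ M.support), w = x ∨ M.Adj w x := by
    rintro ⟨x, rfl | hwx⟩
    exacts [hw x.2.2, hw ⟨x, hwx⟩]
  simp only [matchingLabel, dif_neg (unmatched hu), dif_neg (unmatched hv)]
  split_ifs <;> tauto

namespace IsMatchingAcross

variable {M : SimpleGraph V} {X : Set V}

lemma eq_of_mem_edge (hM : M.IsMatchingAcross X) {v : V} {x x' : ↥(X ∩ M.support)}
    (hx : v = x ∨ M.Adj v x) (hx' : v = x' ∨ M.Adj v x') : x = x' := by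
  rcases hx with hx | hx <;> rcases hx' with hx' | hx'
  · exact Subtype.ext (hx.symm.trans hx')
  · exact absurd x'.2.1 ((hM.mem_iff_notMem_of_adj hx').mp (hx ▸ x.2.1))
  · exact absurd x.2.1 ((hM.mem_iff_notMem_of_adj hx).mp (hx' ▸ x'.2.1))
  · exact Subtype.ext (hM.eq_of_adj_of_adj hx hx')

variable [Finite V]

lemma card_inter_support_pos (hM : M.IsMatchingAcross X) {u v : V} (huv : M.Adj u v) :
    0 < Nat.card ↥(X ∩ M.support) := by
  have : Nonempty ↥(X ∩ M.support) := by
    by_cases hu : u ∈ X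
    · exact ⟨⟨u, hu, v, huv⟩⟩
    · exact ⟨⟨v, (hM.mem_iff_notMem_of_adj huv.symm).mpr hu, u, huv.symm⟩⟩
  exact Nat.card_pos

lemma matchingLabel_eq_castAdd_iff (hM : M.IsMatchingAcross X) {v : V} {x : ↥(X ∩ M.support)} :
    matchingLabel M X v = Fin.castAdd 2 (Finite.equivFin _ x) ↔ v = x ∨ M.Adj v x := by
  unfold matchingLabel
  split_ifs with h h'
  · rw [(Fin.castAdd_injective _ _).eq_iff, (Finite.equivFin _).injective.eq_iff]
    exact ⟨fun hx => hx ▸ h.choose_spec, hM.eq_of_mem_edge h.choose_spec⟩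
  all_goals
    refine iff_of_false (fun hx => ?_) (fun hx => h ⟨x, hx⟩)
    have := (Finite.equivFin _ x).isLt
    rw [Fin.ext_iff, Fin.val_castAdd, Fin.val_natAdd] at hx
    omega

lemma matchingLabel_eq_of_adj (hM : M.IsMatchingAcross X) {u v : V} (huv : M.Adj u v) :
    matchingLabel M X u = matchingLabel M X v := by
  wlog hu : u ∈ X generalizing u v
  · exact (this huv.symm ((hM.mem_iff_notMem_of_adj huv.symm).mpr hu)).symm
  let x : ↥(X ∩ M.support) := ⟨u, hu, v, huv⟩
  rw [hM.matchingLabel_eq_castAdd_iff.mpr (.inl rfl : u = x ∨ _),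
    hM.matchingLabel_eq_castAdd_iff.mpr (.inr huv.symm : v = x ∨ _)]

lemma ncard_preimage_matchingLabel (hM : M.IsMatchingAcross X)
    (i : Fin (Nat.card ↥(X ∩ M.support) + 2)) (hi : (i : ℕ) < Nat.card ↥(X ∩ M.support)) :
    (matchingLabel M X ⁻¹' {i}).ncard = 2 := by
  set x := (Finite.equivFin ↥(X ∩ M.support)).symm ⟨i, hi⟩
  obtain ⟨y, hxy⟩ := x.2.2
  have hi : i = Fin.castAdd 2 (Finite.equivFin _ x) := by rw [Equiv.apply_symm_apply]; rfl
  suffices matchingLabel M X ⁻¹' {i} = {(x : V), y} from this ▸ Set.ncard_pair hxy.ne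
  ext v
  rw [Set.mem_preimage, Set.mem_singleton_iff, hi, hM.matchingLabel_eq_castAdd_iff,
    Set.mem_insert_iff, Set.mem_singleton_iff]
  exact or_congr_right
    ⟨fun hvx => hM.eq_of_adj_of_adj hvx.symm hxy, fun hvy => hvy ▸ hxy.symm⟩

end IsMatchingAcross

def crossNonEdges (G : SimpleGraph V) (X : Set V) : SimpleGraph V where
  Adj u v := ¬G.Adj u v ∧ (u ∈ X ↔ v ∉ X)
  symm := ⟨fun _ _ h => ⟨fun h' => h.1 h'.symm, by tauto⟩⟩
  loopless := ⟨fun _ h => by tauto⟩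

def CrossTriplesDisconnected (G : SimpleGraph V) (X : Set V) : Prop :=
  ∀ a ∈ X, ∀ b ∉ X, ∀ c, c ≠ a → c ≠ b →
    2 ≤ Nat.card (Gᶜ.induce {a, b, c}).ConnectedComponent

namespace CrossTriplesDisconnected

variable {G : SimpleGraph V} {X : Set V}

lemma adj_of_crossNonEdges_adj (hG : G.CrossTriplesDisconnected X) {u v w : V}
    (huv : (G.crossNonEdges X).Adj u v) (hwu : w ≠ u) (hwv : w ≠ v) : G.Adj u w := by
  by_cases hu : u ∈ X
  · exact (adj_of_two_le_card_connectedComponent_induce_compl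
      (hG u hu v (huv.2.mp hu) w hwu hwv) huv.ne hwu.symm hwv.symm huv.1).1
  · have hv : v ∈ X := by simpa [hu] using huv.2
    exact (adj_of_two_le_card_connectedComponent_induce_compl
      (hG v hv u hu w hwv hwu) huv.ne.symm hwv.symm hwu.symm (fun h => huv.1 h.symm)).2

lemma isMatchingAcross (hG : G.CrossTriplesDisconnected X) :
    (G.crossNonEdges X).IsMatchingAcross X where
  eq_of_adj_of_adj huv huw := by
    by_contra hvw
    exact huw.1 (hG.adj_of_crossNonEdges_adj huv huw.ne.symm (Ne.symm hvw))
  mem_iff_notMem_of_adj h := h.2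

lemma notMem_support_of_not_adj (hG : G.CrossTriplesDisconnected X) {u v : V} (huv : u ≠ v)
    (hside : u ∈ X ↔ v ∈ X) (hnadj : ¬G.Adj u v) : u ∉ (G.crossNonEdges X).support := by
  rintro ⟨w, huw : (G.crossNonEdges X).Adj u w⟩
  refine hnadj (hG.adj_of_crossNonEdges_adj huw huv.symm ?_)
  rintro rfl
  exact huw.ne (by simpa [hside] using huw.2)

lemma matchingLabel_eq_of_not_adj [Finite V] (hG : G.CrossTriplesDisconnected X) {u v : V}
    (huv : u ≠ v) (hnadj : ¬G.Adj u v) :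
    matchingLabel (G.crossNonEdges X) X u = matchingLabel (G.crossNonEdges X) X v := by
  by_cases hside : u ∈ X ↔ v ∈ X
  · exact matchingLabel_eq_of_notMem_support (hG.notMem_support_of_not_adj huv hside hnadj)
      (hG.notMem_support_of_not_adj huv.symm hside.symm (fun h => hnadj h.symm)) hside
  · exact hG.isMatchingAcross.matchingLabel_eq_of_adj ⟨hnadj, by tauto⟩

end CrossTriplesDisconnected

end SimpleGraph

open SimpleGraph

lemma two_mul_add_ncard_preimage_add_ncard_preimage {V : Type*} [Fintype V] {t : ℕ}
    (p : V → Fin (t + 2)) (hp : ∀ i : Fin (t + 2), (i : ℕ) < t → (p ⁻¹' {i}).ncard = 2) :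
    2 * t + (p ⁻¹' {⟨t, by omega⟩}).ncard + (p ⁻¹' {⟨t + 1, by omega⟩}).ncard =
      Fintype.card V := by
  classical
  have hfiber : ∀ i, (p ⁻¹' {i}).ncard = (Finset.univ.filter (p · = i)).card := fun i => by
    rw [← Set.ncard_coe_finset]; congr; ext; simp
  rw [← Finset.card_univ, Finset.card_eq_sum_card_fiberwise (fun v _ => Finset.mem_univ (p v)),
    Fin.sum_univ_castSucc, Fin.sum_univ_castSucc]
  simp only [← hfiber]
  rw [Finset.sum_congr rfl fun i _ => hp _ i.isLt, Finset.sum_const, Finset.card_univ,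
    Fintype.card_fin, smul_eq_mul, mul_comm]
  rfl

/-- Let `G` be a graph on `V = X ⊔ Y` with `|X| = r ≥ 1`, `|Y| = s ≥ 1`. If for all distinct
`x_i, x_j ∈ X` and all distinct `y_l, y_m ∈ Y` the restrictions of the independence complex
of `G` to `{x_i, y_l, x_j}` and to `{y_l, x_j, y_m}` are disconnected (have at least 2
connected components), then `G` contains either the complete bipartite graph `K_{r,s}` on the
bipartition `(X, Y)` or a complete multipartite graph `K_{2,…,2,a,b}` (with `t ≥ 1` parts of
size 2 and two parts of sizes `a`, `b`, where `2t + a + b = r + s`) on the vertex set `V`. -/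
theorem stmt10 {V : Type*} [Fintype V] (G : SimpleGraph V)
    (X Y : Set V) (hd : Disjoint X Y) (hu : X ∪ Y = Set.univ)
    (r s : ℕ) (hX : X.ncard = r) (hY : Y.ncard = s)
    (h1 : ∀ xi ∈ X, ∀ xj ∈ X, ∀ yl ∈ Y, xi ≠ xj →
      2 ≤ Nat.card ((Gᶜ.induce ({xi, yl, xj} : Set V)).ConnectedComponent))
    (h2 : ∀ yl ∈ Y, ∀ ym ∈ Y, ∀ xj ∈ X, yl ≠ ym →
      2 ≤ Nat.card ((Gᶜ.induce ({yl, xj, ym} : Set V)).ConnectedComponent)) :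
    (∀ x ∈ X, ∀ y ∈ Y, G.Adj x y) ∨
    (∃ t a b : ℕ, 1 ≤ t ∧ 2 * t + a + b = r + s ∧
      ∃ p : V → Fin (t + 2),
        (∀ i : Fin (t + 2), (i : ℕ) < t → (p ⁻¹' {i}).ncard = 2) ∧
        (p ⁻¹' {⟨t, by omega⟩}).ncard = a ∧
        (p ⁻¹' {⟨t + 1, by omega⟩}).ncard = b ∧
        (∀ x y : V, p x ≠ p y → G.Adj x y)) := by
  obtain rfl : Xᶜ = Y := IsCompl.compl_eq ⟨hd, codisjoint_iff.mpr hu⟩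
  have hG : G.CrossTriplesDisconnected X := fun a ha b hb c hca hcb => by
    by_cases hc : c ∈ X
    · exact h1 a ha c hc b hb hca.symm
    · exact Set.insert_comm b a {c} ▸ h2 b hb c hc a ha hcb.symm
  by_cases hK : ∀ x ∈ X, ∀ y ∈ Xᶜ, G.Adj x y
  · exact .inl hK
  push Not at hK
  obtain ⟨x, hx, y, hy, hxy⟩ := hK
  have hxy' : (G.crossNonEdges X).Adj x y := ⟨hxy, by simpa [hx] using hy⟩
  have hM := hG.isMatchingAcross
  refine .inr ⟨_, _, _, hM.card_inter_support_pos hxy', ?_, matchingLabel _ X,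
    hM.ncard_preimage_matchingLabel, rfl, rfl, fun u v huv => ?_⟩
  · rw [two_mul_add_ncard_preimage_add_ncard_preimage _ hM.ncard_preimage_matchingLabel, ← hX,
      ← hY, Set.ncard_add_ncard_compl, Nat.card_eq_fintype_card]
  · by_contra hnadj
    exact huv (hG.matchingLabel_eq_of_not_adj (fun h => huv (congrArg _ h)) hnadj)
end

section
/- In the complete tripartite graph K_{2,2,2} with parts X_1, X_2, X_3, for three distinct vertices x_i, x_j, x_k: if they lie in three distinct parts, the restriction of the independence complex to {x_i, x_j, x_k} has 3 connected components (so β_{1} at this multidegree equals 2); if exactly two of them lie in the same part, the restriction has 2 connected components (so β_1 equals 1). In particular, the first multigraded Betti numbers of K_{2,2,2} and K_{3,3} differ at some squarefree degree of size 3, even though K_{2,2,2} has a nonzero Betti number at every multidegree where K_{3,3} does. -/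
/-!
In the complement of a complete multipartite graph two distinct vertices are adjacent exactly
when they lie in the same part, so on any vertex set the connected components of the induced
subgraph are its traces on the parts. Hence the number of components of the restriction to
`{x, y, z}` is the number of parts that `x, y, z` meet.
-/

namespace SimpleGraph

variable {W β : Type*} {H : SimpleGraph W} {f : W → β}

theorem reachable_iff_eq_of_adj_iff (hH : ∀ u v, H.Adj u v ↔ u ≠ v ∧ f u = f v) {u v : W} :
    H.Reachable u v ↔ f u = f v := by
  refine ⟨fun ⟨w⟩ => ?_, fun huv => ?_⟩
  · induction w with
    | nil => rfl
    | cons h w ih => exact ((hH _ _).1 h).2.trans (ih ⟨w⟩)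
  · obtain rfl | hne := eq_or_ne u v
    · rfl
    · exact ((hH u v).2 ⟨hne, huv⟩).reachable

theorem card_connectedComponent_eq_card_range (hH : ∀ u v, H.Adj u v ↔ u ≠ v ∧ f u = f v) :
    Nat.card H.ConnectedComponent = Nat.card (Set.range f) := by
  let g : H.ConnectedComponent → Set.range f :=
    ConnectedComponent.lift (fun u => ⟨f u, u, rfl⟩) fun _ _ w _ =>
      Subtype.ext ((reachable_iff_eq_of_adj_iff hH).1 w.reachable)
  refine Nat.card_eq_of_bijective g
    ⟨fun c d hcd => ?_, fun ⟨_, u, hu⟩ => ⟨H.connectedComponentMk u, Subtype.ext hu⟩⟩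
  induction c using ConnectedComponent.ind
  induction d using ConnectedComponent.ind
  exact ConnectedComponent.sound ((reachable_iff_eq_of_adj_iff hH).2 (congrArg Subtype.val hcd))

theorem card_connectedComponent_compl_induce {p : W → β} {G : SimpleGraph W}
    (hG : ∀ u v, G.Adj u v ↔ p u ≠ p v) (S : Set W) :
    Nat.card (Gᶜ.induce S).ConnectedComponent = (p '' S).ncard := by
  rw [card_connectedComponent_eq_card_range (f := p ∘ Subtype.val), Set.range_comp,
    Subtype.range_coe, Nat.card_coe_set_eq]
  intro u v
  simp [hG, Subtype.ext_iff]

end SimpleGraph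

theorem stmt14_general {V : Type*}
    (p : V → Fin 3)
    (G : SimpleGraph V) (hG : ∀ x y, G.Adj x y ↔ p x ≠ p y)
    (x y z : V) :
    ((p x ≠ p y ∧ p y ≠ p z ∧ p x ≠ p z) →
      Nat.card ((Gᶜ.induce ({x, y, z} : Set V)).ConnectedComponent) = 3) ∧
    ((p x = p y ∧ p x ≠ p z) →
      Nat.card ((Gᶜ.induce ({x, y, z} : Set V)).ConnectedComponent) = 2) := by
  simp only [SimpleGraph.card_connectedComponent_compl_induce hG, Set.image_insert_eq,
    Set.image_singleton]
  refine ⟨fun ⟨hxy, hyz, hxz⟩ => Set.ncard_eq_three.2 ⟨_, _, _, hxy, hxz, hyz, rfl⟩,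
    fun ⟨hxy, hxz⟩ => ?_⟩
  rw [hxy, Set.insert_eq_of_mem (Set.mem_insert _ _), Set.ncard_pair (hxy ▸ hxz)]

/-- In the complete tripartite graph `K_{2,2,2}` (parts = fibers of `p`, each of size 2), for
three distinct vertices `x, y, z`: if they lie in three distinct parts, the restriction of the
independence complex to `{x, y, z}` has 3 connected components (so `β₁ = 2` at this
multidegree); if exactly two of them lie in the same part, it has 2 connected components (so
`β₁ = 1`). (Components of the complex coincide with those of the induced subgraph of `Gᶜ`.) -/
theorem stmt14 {V : Type*} [Fintype V] [DecidableEq V]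
    (p : V → Fin 3) (hp : ∀ t : Fin 3, (p ⁻¹' {t}).ncard = 2)
    (G : SimpleGraph V) (hG : ∀ x y, G.Adj x y ↔ p x ≠ p y)
    (x y z : V) (hxy : x ≠ y) (hyz : y ≠ z) (hxz : x ≠ z) :
    ((p x ≠ p y ∧ p y ≠ p z ∧ p x ≠ p z) →
      Nat.card ((Gᶜ.induce ({x, y, z} : Set V)).ConnectedComponent) = 3) ∧
    ((p x = p y ∧ p x ≠ p z) →
      Nat.card ((Gᶜ.induce ({x, y, z} : Set V)).ConnectedComponent) = 2) :=
  stmt14_general p G hG x y z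
end
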